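/- Let (A_i)_{i∈κ} be infinite Boolean algebras, D an ultrafilter on κ, λ_i = π(A_i), and let λ be the D-limit of (λ_i), i.e., the least cardinal ρ such that {i : λ_i ≤ ρ} ∈ D. Then the ultraproduct A = ∏ A_i / D satisfies π(A) ≥ λ. -/

import Mathlib

/-! Let `X` be a dense subset of `∏ Aᵢ / D \ {⊥}` and pick representatives `(xᵢ)` of its elements.
If `#X < π Aᵢ` for `D`-almost all `i`, then at each such `i` the trace `{xᵢ | x ∈ X}` is too
small to be dense, so some `bᵢ ≠ ⊥` lies above none of its nonzero elements; the class of `(bᵢ)`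
is then nonzero and lies above no element of `X`. Hence `π Aᵢ ≤ #X` for `D`-almost all `i`, and
taking `#X = π (∏ Aᵢ / D)` the minimality of the `D`-limit gives the bound. -/

open Cardinal

universe u v

/-- The algebraic density `π A` of a Boolean algebra: the least cardinality of a
dense subset of `A \ {⊥}`. -/
noncomputable def piDensity (A : Type v) [BooleanAlgebra A] : Cardinal.{v} :=
  sInf {c | ∃ X : Set A, (∀ x ∈ X, x ≠ ⊥) ∧ (∀ a : A, a ≠ ⊥ → ∃ x ∈ X, x ≤ a) ∧ c = #X}

section BUP

variable {ι : Type u} (D : Ultrafilter ι) (A : ι → Type u) [∀ i, BooleanAlgebra (A i)]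

instance piBooleanRing : BooleanRing (∀ i, AsBoolRing (A i)) :=
  { Pi.ring with isIdempotentElem := fun f => funext fun i => BooleanRing.mul_self (f i) }

/-- The ideal of elements vanishing `D`-almost everywhere. -/
def upIdeal : Ideal (∀ i, AsBoolRing (A i)) where
  carrier := {f | {i | f i = 0} ∈ D}
  zero_mem' := by
    have : {i | (0 : ∀ i, AsBoolRing (A i)) i = 0} = Set.univ := by ext i; simp
    simp only [Set.mem_setOf_eq] at *
    exact this ▸ Filter.univ_mem
  add_mem' := by
    intro f g hf hg
    filter_upwards [hf, hg] with i h1 h2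
    simp only [Pi.add_apply, h1, h2, add_zero]
  smul_mem' := by
    intro c f hf
    filter_upwards [hf] with i h1
    simp only [smul_eq_mul, Pi.mul_apply, h1, mul_zero]

instance upQuotBooleanRing : BooleanRing ((∀ i, AsBoolRing (A i)) ⧸ upIdeal D A) :=
  { (inferInstance : CommRing ((∀ i, AsBoolRing (A i)) ⧸ upIdeal D A)) with
    isIdempotentElem := fun a => by
      obtain ⟨f, rfl⟩ := Ideal.Quotient.mk_surjective a
      show _ * _ = _
      rw [← map_mul, BooleanRing.mul_self] }

/-- The Boolean ultraproduct `∏ᵢ Aᵢ / D`. -/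
def BUP : Type u := AsBoolAlg ((∀ i, AsBoolRing (A i)) ⧸ upIdeal D A)

noncomputable instance : BooleanAlgebra (BUP D A) :=
  inferInstanceAs (BooleanAlgebra (AsBoolAlg _))

end BUP

section cardUP

variable {ι : Type u} (D : Ultrafilter ι)

/-- Set-theoretic ultraproduct of a family of cardinals, seen as the quotient of the
product of the corresponding sets of ordinals by `D`-almost-everywhere equality. -/
def cardSetoid (lam : ι → Cardinal.{u}) :
    Setoid (∀ i, (lam i).ord.ToType) where
  r f g := {i | f i = g i} ∈ D
  iseqv := by
    refine ⟨fun f => by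
      have : {i | f i = f i} = Set.univ := by ext i; simp
      rw [this]; exact Filter.univ_mem, fun {f g} h => ?_, fun {f g h} h1 h2 => ?_⟩
    · filter_upwards [h] with i hi using hi.symm
    · filter_upwards [h1, h2] with i hi1 hi2 using hi1.trans hi2

/-- The cardinality of the ultraproduct `∏ᵢ λᵢ / D` of a family of cardinals. -/
noncomputable def cardUP (lam : ι → Cardinal.{u}) : Cardinal.{u} :=
  #(Quotient (cardSetoid D lam))

end cardUP

section piDensity

variable {α : Type v} [BooleanAlgebra α]

theorem piDensity_le_mk {X : Set α} (hX₀ : ∀ x ∈ X, x ≠ ⊥)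
    (hX : ∀ a : α, a ≠ ⊥ → ∃ x ∈ X, x ≤ a) : piDensity α ≤ #X :=
  csInf_le' ⟨X, hX₀, hX, rfl⟩

variable (α) in
theorem exists_mk_eq_piDensity : ∃ X : Set α, (∀ x ∈ X, x ≠ ⊥) ∧
    (∀ a : α, a ≠ ⊥ → ∃ x ∈ X, x ≤ a) ∧ #X = piDensity α := by
  obtain ⟨X, hX₀, hX, hcard⟩ := csInf_mem (s := {c | ∃ X : Set α, (∀ x ∈ X, x ≠ ⊥) ∧
    (∀ a : α, a ≠ ⊥ → ∃ x ∈ X, x ≤ a) ∧ c = #X})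
    ⟨_, {a | a ≠ ⊥}, fun _ hx => hx, fun a ha => ⟨a, ha, le_rfl⟩, rfl⟩
  exact ⟨X, hX₀, hX, hcard.symm⟩

theorem exists_ne_bot_forall_not_le_of_mk_lt_piDensity {Y : Set α} (hY : #Y < piDensity α) :
    ∃ b : α, b ≠ ⊥ ∧ ∀ y ∈ Y, y ≠ ⊥ → ¬y ≤ b := by
  by_contra! h
  refine hY.not_ge ((piDensity_le_mk (X := {y ∈ Y | y ≠ ⊥}) (fun _ hy => hy.2) ?_).trans
    (mk_le_mk_of_subset (Set.sep_subset _ _)))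
  intro a ha
  obtain ⟨y, hyY, hy₀, hya⟩ := h a ha
  exact ⟨y, ⟨hyY, hy₀⟩, hya⟩

end piDensity

namespace BUP

variable {ι : Type u} {D : Ultrafilter ι} {A : ι → Type u} [∀ i, BooleanAlgebra (A i)]

variable (D) in
def mk (f : ∀ i, A i) : BUP D A :=
  toBoolAlg (Ideal.Quotient.mk (upIdeal D A) fun i => toBoolRing (f i))

theorem mk_surjective : Function.Surjective (mk D (A := A)) := fun x => by
  obtain ⟨f, hf⟩ := Ideal.Quotient.mk_surjective (ofBoolAlg x)
  exact ⟨fun i => ofBoolRing (f i), congrArg toBoolAlg hf⟩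

theorem mk_eq_mk_iff {f g : ∀ i, A i} :
    mk D f = mk D g ↔ ∀ᶠ i in (D : Filter ι), f i = g i := by
  refine toBoolAlg_inj.trans (Ideal.Quotient.eq.trans ?_)
  change {i | toBoolRing (f i) - toBoolRing (g i) = 0} ∈ D ↔ _
  simp only [sub_eq_zero, toBoolRing_inj]
  rfl

theorem mk_inf (f g : ∀ i, A i) : mk D (f ⊓ g) = mk D f ⊓ mk D g := rfl

theorem mk_bot : mk D (⊥ : ∀ i, A i) = ⊥ := rfl

theorem mk_eq_bot_iff {f : ∀ i, A i} : mk D f = ⊥ ↔ ∀ᶠ i in (D : Filter ι), f i = ⊥ := by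
  rw [← mk_bot, mk_eq_mk_iff]
  rfl

theorem mk_le_mk_iff {f g : ∀ i, A i} :
    mk D f ≤ mk D g ↔ ∀ᶠ i in (D : Filter ι), f i ≤ g i := by
  simp only [← inf_eq_left, ← mk_inf, mk_eq_mk_iff, Pi.inf_apply]

theorem eventually_piDensity_le_mk {X : Set (BUP D A)} (hX₀ : ∀ x ∈ X, x ≠ ⊥)
    (hX : ∀ a : BUP D A, a ≠ ⊥ → ∃ x ∈ X, x ≤ a) :
    ∀ᶠ i in (D : Filter ι), piDensity (A i) ≤ #X := by
  by_contra hbad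
  have hlarge : ∀ᶠ i in (D : Filter ι), #X < piDensity (A i) := by
    simpa only [not_le] using Ultrafilter.eventually_not.2 hbad
  let rep := Function.surjInv (mk_surjective (D := D) (A := A))
  have hb : ∀ i, ∃ b : A i, #X < piDensity (A i) →
      b ≠ ⊥ ∧ ∀ x ∈ X, rep x i ≠ ⊥ → ¬rep x i ≤ b := by
    intro i
    by_cases hi : #X < piDensity (A i)
    · obtain ⟨b, hb₀, hb⟩ := exists_ne_bot_forall_not_le_of_mk_lt_piDensity
        ((mk_image_le (f := fun x => rep x i)).trans_lt hi)
      exact ⟨b, fun _ => ⟨hb₀, fun x hx => hb _ (Set.mem_image_of_mem _ hx)⟩⟩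
    · exact ⟨⊥, fun h => absurd h hi⟩
  choose b hb using hb
  have hb₀ : mk D b ≠ ⊥ := fun h => by
    obtain ⟨i, hi, hbi⟩ := (hlarge.and (mk_eq_bot_iff.1 h)).exists
    exact (hb i hi).1 hbi
  obtain ⟨x, hxX, hxb⟩ := hX _ hb₀
  have hx : mk D (rep x) = x := Function.surjInv_eq _ x
  have hx₀ : ∀ᶠ i in (D : Filter ι), rep x i ≠ ⊥ :=
    Ultrafilter.eventually_not.2 fun h => hX₀ x hxX (hx ▸ mk_eq_bot_iff.2 h)
  obtain ⟨i, hi, hxi₀, hxib⟩ :=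
    (hlarge.and (hx₀.and (mk_le_mk_iff.1 (hx.le.trans hxb)))).exists
  exact (hb i hi).2 x hxX hxi₀ hxib

end BUP

theorem dLimit_le_piDensity_ultraproduct_general {ι : Type u} (D : Ultrafilter ι) (A : ι → Type u)
    [∀ i, BooleanAlgebra (A i)] (lam : Cardinal.{u})
    (hlim : IsLeast {ρ : Cardinal.{u} | {i | piDensity (A i) ≤ ρ} ∈ D} lam) :
    lam ≤ piDensity (BUP D A) := by
  obtain ⟨X, hX₀, hX, hcard⟩ := exists_mk_eq_piDensity (BUP D A)
  exact hlim.2 (hcard ▸ BUP.eventually_piDensity_le_mk hX₀ hX)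

/-- Claim 2 of Theorem 1.1: if `lam` is the `D`-limit of the densities `π Aᵢ`, then the
Boolean ultraproduct `A = ∏ Aᵢ / D` satisfies `π A ≥ lam`. -/
theorem dLimit_le_piDensity_ultraproduct {ι : Type u} (D : Ultrafilter ι) (A : ι → Type u)
    [∀ i, BooleanAlgebra (A i)] [∀ i, Infinite (A i)] (lam : Cardinal.{u})
    (hlim : IsLeast {ρ : Cardinal.{u} | {i | piDensity (A i) ≤ ρ} ∈ D} lam) :
    lam ≤ piDensity (BUP D A) :=
  dLimit_le_piDensity_ultraproduct_general D A lam hlim
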